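/- There exists a constant C > 0 such that for all ξ, η ∈ ℝ³, |ξ|·|ξ−η|·|η| ≤ C·|Φ₁(ξ,η)|·(1 + |ξ−η|²)·(1 + |η|²). (Equivalently, the multiplier |ξ||ξ−η||η| / (Φ₁(ξ,η)·⟨ξ−η⟩²·⟨η⟩²) is bounded uniformly on ℝ³ × ℝ³.) -/

import Mathlib

/-!
Write `a = |ξ|`, `b = |ξ - η|`, `c = |η|`. Since `p` is increasing and `a ≤ b + c`,
`-Φ₁ ≥ p b + p c - p (b + c) = b (q b - q (b + c)) + c (q c - q (b + c))`.
As `q² = 1 + 1/⟨r⟩²` and `q ≤ 3/2`, each difference of `q`'s is at least a third of the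
corresponding difference of `q²`'s, which is explicit: `q b - q (b + c) ≥ c (2b + c) / (3⟨b⟩²⟨b+c⟩²)`.
What remains is the polynomial inequality `1 + (b + c)² ≤ 2 (2 + b² + c²)`.
-/

noncomputable def q (r : ℝ) : ℝ := Real.sqrt ((2 + r ^ 2) / (1 + r ^ 2))
noncomputable def p (r : ℝ) : ℝ := r * q r
noncomputable def Φ₁ (ξ η : EuclideanSpace ℝ (Fin 3)) : ℝ :=
  p ‖ξ‖ - p ‖ξ - η‖ - p ‖η‖

lemma q_sq (r : ℝ) : q r ^ 2 = 1 + 1 / (1 + r ^ 2) := by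
  rw [q, Real.sq_sqrt (by positivity)]
  field_simp
  ring

lemma q_pos (r : ℝ) : 0 < q r := Real.sqrt_pos.2 (by positivity)

lemma q_le_three_halves (r : ℝ) : q r ≤ 3 / 2 := by
  have hq2 : q r ^ 2 ≤ 2 := by
    rw [q_sq]
    have : 1 / (1 + r ^ 2) ≤ 1 := by
      rw [div_le_one (by positivity)]
      nlinarith
    linarith
  nlinarith [q_pos r]

lemma sq_sub_sq_le_q_sub_q {a s : ℝ} (h : a ^ 2 ≤ s ^ 2) :
    s ^ 2 - a ^ 2 ≤ 3 * (1 + a ^ 2) * (1 + s ^ 2) * (q a - q s) := by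
  have hA : (0 : ℝ) < 1 + a ^ 2 := by positivity
  have hS : (0 : ℝ) < 1 + s ^ 2 := by positivity
  have hdiff : (q a - q s) * (q a + q s) * ((1 + a ^ 2) * (1 + s ^ 2)) = s ^ 2 - a ^ 2 := by
    have : (q a - q s) * (q a + q s) = 1 / (1 + a ^ 2) - 1 / (1 + s ^ 2) := by
      linear_combination q_sq a - q_sq s
    rw [this]
    field_simp
    ring
  have hsum_pos : 0 < q a + q s := add_pos (q_pos a) (q_pos s)
  have hsum_le : q a + q s ≤ 3 := by linarith [q_le_three_halves a, q_le_three_halves s]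
  have hmono : 0 ≤ q a - q s := by
    by_contra! hneg
    nlinarith [mul_pos hA hS, mul_pos (mul_pos hA hS) hsum_pos]
  nlinarith [mul_nonneg (mul_nonneg hmono (sub_nonneg.2 hsum_le)) (mul_pos hA hS).le]

lemma p_sq (r : ℝ) : p r ^ 2 = (1 + r ^ 2) - 1 / (1 + r ^ 2) := by
  rw [p, mul_pow, q_sq]
  field_simp
  ring

lemma p_nonneg {r : ℝ} (hr : 0 ≤ r) : 0 ≤ p r := mul_nonneg hr (q_pos r).le

lemma p_monotoneOn : MonotoneOn p (Set.Ici 0) := by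
  intro a ha s hs has
  rw [← sq_le_sq₀ (p_nonneg ha) (p_nonneg hs), p_sq, p_sq]
  have hsq : 1 + a ^ 2 ≤ 1 + s ^ 2 := by gcongr
  have hinv : 1 / (1 + s ^ 2) ≤ 1 / (1 + a ^ 2) := by gcongr
  linarith

lemma mul_mul_add_le_p_add_p_sub_p_add {b c : ℝ} (hb : 0 ≤ b) (hc : 0 ≤ c) :
    b * c * (b + c) ≤ 6 * (p b + p c - p (b + c)) * (1 + b ^ 2) * (1 + c ^ 2) := by
  have hS : (0 : ℝ) < 1 + (b + c) ^ 2 := by positivity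
  have hqb := sq_sub_sq_le_q_sub_q (a := b) (s := b + c) (by nlinarith)
  have hqc := sq_sub_sq_le_q_sub_q (a := c) (s := b + c) (by nlinarith)
  have hsplit : p b + p c - p (b + c) = b * (q b - q (b + c)) + c * (q c - q (b + c)) := by
    simp only [p]
    ring
  have hlower : b * c * (b + c) * (1 + (b + c) ^ 2)
      ≤ 2 * (b * (1 + c ^ 2) * (c * (2 * b + c)) + c * (1 + b ^ 2) * (b * (2 * c + b))) := by
    have : 0 ≤ b * c := mul_nonneg hb hc
    nlinarith [mul_nonneg this (mul_nonneg hb (sq_nonneg c)),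
      mul_nonneg this (mul_nonneg hc (sq_nonneg b)), mul_nonneg this (sq_nonneg (b - c)),
      mul_nonneg this (mul_nonneg hb (sq_nonneg b)), mul_nonneg this (mul_nonneg hc (sq_nonneg c))]
  have hupper : 2 * (b * (1 + c ^ 2) * (c * (2 * b + c)) + c * (1 + b ^ 2) * (b * (2 * c + b)))
      ≤ 6 * (p b + p c - p (b + c)) * (1 + b ^ 2) * (1 + c ^ 2) * (1 + (b + c) ^ 2) := by
    rw [hsplit]
    have h1 : (0 : ℝ) ≤ b * (1 + c ^ 2) := by positivity
    have h2 : (0 : ℝ) ≤ c * (1 + b ^ 2) := by positivity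
    nlinarith [mul_le_mul_of_nonneg_left hqb h1, mul_le_mul_of_nonneg_left hqc h2]
  exact le_of_mul_le_mul_right (hlower.trans hupper) hS

theorem stmt7 :
    ∃ C : ℝ, 0 < C ∧
      ∀ ξ η : EuclideanSpace ℝ (Fin 3),
        ‖ξ‖ * ‖ξ - η‖ * ‖η‖ ≤ C * |Φ₁ ξ η| * (1 + ‖ξ - η‖ ^ 2) * (1 + ‖η‖ ^ 2) := by
  refine ⟨6, by norm_num, fun ξ η => ?_⟩
  have htri : ‖ξ‖ ≤ ‖ξ - η‖ + ‖η‖ := (norm_le_norm_add_norm_sub' ξ η).trans_eq (add_comm _ _)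
  have hp : p ‖ξ‖ ≤ p (‖ξ - η‖ + ‖η‖) :=
    p_monotoneOn (norm_nonneg ξ) (by positivity : (0 : ℝ) ≤ ‖ξ - η‖ + ‖η‖) htri
  have hΦ : p ‖ξ - η‖ + p ‖η‖ - p (‖ξ - η‖ + ‖η‖) ≤ |Φ₁ ξ η| := by
    have := neg_abs_le (Φ₁ ξ η)
    rw [Φ₁] at this ⊢
    linarith
  calc ‖ξ‖ * ‖ξ - η‖ * ‖η‖ ≤ ‖ξ - η‖ * ‖η‖ * (‖ξ - η‖ + ‖η‖) := by
        rw [mul_assoc, mul_comm]; gcongr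
    _ ≤ 6 * (p ‖ξ - η‖ + p ‖η‖ - p (‖ξ - η‖ + ‖η‖)) * (1 + ‖ξ - η‖ ^ 2) * (1 + ‖η‖ ^ 2) :=
        mul_mul_add_le_p_add_p_sub_p_add (norm_nonneg _) (norm_nonneg _)
    _ ≤ 6 * |Φ₁ ξ η| * (1 + ‖ξ - η‖ ^ 2) * (1 + ‖η‖ ^ 2) := by gcongr
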